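/- Let k ≥ 1 and let δ'_1 ≥ δ'_2 ≥ … ≥ δ'_k > 0 be ordinals, let γ = ω^{δ'_1} + … + ω^{δ'_k}, and let Λ_1, …, Λ_k ⊆ γ be the consecutive intervals of γ with Λ_j of order type ω^{δ'_j} (so Λ_1 = [0, ω^{δ'_1}), Λ_2 = [ω^{δ'_1}, ω^{δ'_1}+ω^{δ'_2}), etc.). Then a set C ⊆ γ is a copy of γ if and only if, for each j ∈ {1, …, k}, the set C ∩ Λ_j is the image of an order-embedding of the linear order Λ_j into itself; equivalently, P(γ) = { ⋃_{j=1}^{k} C_j : C_j a copy of Λ_j for each j }. -/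

import Mathlib

open Ordinal Set

/-- The set of copies of an ordinal `a`: subsets of the interval `[0, a)` that are
ranges of order-embeddings of `Iio a` into itself. -/
def Copies (a : Ordinal) : Set (Set Ordinal) :=
  {A | ∃ f : Set.Iio a ↪o Set.Iio a, A = Subtype.val '' Set.range ⇑f}

/-- Copies of the interval `[u, v)` of ordinals: images of order-embeddings of the
suborder `[u, v)` into itself. -/
def ICopies (u v : Ordinal) : Set (Set Ordinal) :=
  {D | ∃ f : Set.Ico u v ↪o Set.Ico u v, D = Subtype.val '' Set.range ⇑f}

/-!
An order-embedding `f` of `γ` into itself satisfies `x ≤ f x` and maps the final segment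
`[x, γ)` into `[f x, γ)`, so `γ - x ≤ γ - f x`. If `x < σ j` lies in the block
`[σ i, σ (i + 1))`, then `γ - x = ω ^ δ' i + (γ - σ (i + 1))`, and since the exponents do not
increase the tail satisfies `γ - σ (i + 1) < ω ^ δ' i * ω`, so it does not absorb `ω ^ δ' i`:
`γ - σ j < γ - x`. Hence `f` maps every initial segment `[0, σ j)` into itself and restricts to
a self-embedding of every block. Conversely, self-embeddings of the blocks glue to one of `γ`.
-/

section WellOrder

variable {α : Type*} [LinearOrder α] [WellFoundedLT α] {f : α → α} {a b x : α}

theorem StrictMonoOn.le_apply_of_mapsTo_Iio (hf : StrictMonoOn f (Iio a))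
    (hmaps : MapsTo f (Iio a) (Iio a)) (hx : x < a) : x ≤ f x :=
  StrictMono.le_apply (f := hmaps.restrict f (Iio a) (Iio a)) (fun y z hyz => hf y.2 z.2 hyz)
    (x := ⟨x, hx⟩)

theorem StrictMonoOn.le_of_mapsTo_Iio (hf : StrictMonoOn f (Iio a))
    (hmaps : MapsTo f (Iio a) (Iio b)) : a ≤ b := by
  by_contra! hba
  exact (hmaps hba).not_ge <|
    hf.le_apply_of_mapsTo_Iio (hmaps.mono_right (Iio_subset_Iio hba.le)) hba

end WellOrder

theorem exists_orderEmbedding_eq_image_range_iff {α : Type*} [LinearOrder α] {s D : Set α} :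
    (∃ f : s ↪o s, D = Subtype.val '' range f) ↔
      ∃ g : α → α, StrictMonoOn g s ∧ MapsTo g s s ∧ D = g '' s := by
  classical
  constructor
  · rintro ⟨f, rfl⟩
    refine ⟨fun y => if h : y ∈ s then f ⟨y, h⟩ else y, ?_, ?_, ?_⟩
    · intro y hy z hz hyz
      simp only [dif_pos hy, dif_pos hz]
      exact f.strictMono (Subtype.mk_lt_mk.2 hyz)
    · intro y hy
      simpa only [dif_pos hy] using (f ⟨y, hy⟩).2
    · ext y
      simp only [mem_image, mem_range]
      constructor
      · rintro ⟨_, ⟨x, rfl⟩, rfl⟩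
        exact ⟨x, x.2, by simp⟩
      · rintro ⟨x, hx, rfl⟩
        exact ⟨_, ⟨⟨x, hx⟩, rfl⟩, by simp [hx]⟩
  · rintro ⟨g, hg, hmaps, rfl⟩
    refine ⟨OrderEmbedding.ofStrictMono (hmaps.restrict g s s) fun y z hyz => hg y.2 z.2 hyz,
      ?_⟩
    change g '' s = Subtype.val '' range (hmaps.restrict g s s)
    rw [MapsTo.range_restrict, Subtype.image_preimage_coe,
      inter_eq_right.2 hmaps.image_subset]

theorem mem_copies_iff {a : Ordinal} {A : Set Ordinal} :
    A ∈ Copies a ↔ ∃ g : Ordinal → Ordinal,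
      StrictMonoOn g (Iio a) ∧ MapsTo g (Iio a) (Iio a) ∧ A = g '' Iio a :=
  exists_orderEmbedding_eq_image_range_iff

theorem mem_iCopies_iff {u v : Ordinal} {D : Set Ordinal} :
    D ∈ ICopies u v ↔ ∃ g : Ordinal → Ordinal,
      StrictMonoOn g (Ico u v) ∧ MapsTo g (Ico u v) (Ico u v) ∧ D = g '' Ico u v :=
  exists_orderEmbedding_eq_image_range_iff

theorem subset_Iio_of_mem_copies {a : Ordinal} {A : Set Ordinal} (hA : A ∈ Copies a) :
    A ⊆ Iio a := by
  obtain ⟨g, -, hmaps, rfl⟩ := mem_copies_iff.1 hA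
  exact hmaps.image_subset

theorem Ordinal.sub_le_sub_left {a b : Ordinal} (h : a ≤ b) (c : Ordinal) : c - b ≤ c - a :=
  sub_le.2 ((le_add_sub c a).trans (by gcongr))

theorem Ordinal.lt_of_lt_sub {a b c : Ordinal} (h : b < a - c) : c < a :=
  Ordinal.sub_ne_zero_iff_lt.1 (pos_of_gt h).ne'

section SelfEmbedding

variable {γ : Ordinal} {f : Ordinal → Ordinal} (hf : StrictMonoOn f (Iio γ))
  (hmaps : MapsTo f (Iio γ) (Iio γ))
include hf hmaps

theorem sub_le_sub_apply_of_strictMonoOn {x : Ordinal} (hx : x < γ) : γ - x ≤ γ - f x := by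
  have hshift : ∀ t < γ - x, x + t < γ := fun t ht => lt_sub.1 ht
  have hle : ∀ t < γ - x, f x ≤ f (x + t) := fun t ht =>
    hf.monotoneOn hx (hshift t ht) le_self_add
  refine StrictMonoOn.le_of_mapsTo_Iio (f := fun t => f (x + t) - f x) ?_ ?_
  · intro t ht t' ht' htt'
    rw [mem_Iio] at ht ht'
    rw [lt_sub, Ordinal.add_sub_cancel_of_le (hle t ht)]
    exact hf (hshift t ht) (hshift t' ht') (by gcongr)
  · intro t ht
    rw [mem_Iio] at ht
    rw [mem_Iio, lt_sub, Ordinal.add_sub_cancel_of_le (hle t ht)]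
    exact hmaps (hshift t ht)

theorem mapsTo_Iio_of_sub_lt_sub {u : Ordinal} (hu : ∀ x < u, γ - u < γ - x) :
    MapsTo f (Iio u) (Iio u) := by
  intro x hx
  by_contra! hfx
  rw [mem_Iio, not_lt] at hfx
  have hxγ : x < γ := lt_of_lt_sub (hu x hx)
  exact (hu x hx).not_ge <|
    (sub_le_sub_apply_of_strictMonoOn hf hmaps hxγ).trans (sub_le_sub_left hfx γ)

end SelfEmbedding

theorem inter_Ico_mem_iCopies {γ u v : Ordinal} {A : Set Ordinal} (hA : A ∈ Copies γ)
    (hu : ∀ x < u, γ - u < γ - x) (hv : ∀ x < v, γ - v < γ - x) :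
    A ∩ Ico u v ∈ ICopies u v := by
  obtain ⟨f, hf, hmaps, rfl⟩ := mem_copies_iff.1 hA
  have hfu := mapsTo_Iio_of_sub_lt_sub hf hmaps hu
  have hfv := mapsTo_Iio_of_sub_lt_sub hf hmaps hv
  have hvγ : ∀ x < v, x < γ := fun x hx => lt_of_lt_sub (hv x hx)
  have hle : ∀ x < v, x ≤ f x := fun x hx => hf.le_apply_of_mapsTo_Iio hmaps (hvγ x hx)
  refine mem_iCopies_iff.2 ⟨f, hf.mono fun x hx => hvγ x hx.2,
    fun x hx => ⟨hx.1.trans (hle x hx.2), hfv hx.2⟩, ?_⟩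
  ext y
  constructor
  · rintro ⟨⟨x, hx, rfl⟩, hfx⟩
    have hxv : x < v := (hf.le_apply_of_mapsTo_Iio hmaps hx).trans_lt hfx.2
    exact ⟨x, ⟨not_lt.1 fun hxu => (hfu hxu).not_ge hfx.1, hxv⟩, rfl⟩
  · rintro ⟨x, hx, rfl⟩
    exact ⟨⟨x, hvγ x hx.2, rfl⟩, hx.1.trans (hle x hx.2), hfv hx.2⟩

theorem exists_lt_mem_Ico_of_mem_Ico {X : Type*} [LinearOrder X] {σ : ℕ → X} {j : ℕ} {x : X}
    (hx : x ∈ Ico (σ 0) (σ j)) : ∃ i < j, x ∈ Ico (σ i) (σ (i + 1)) := by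
  simpa only [mem_iUnion, Finset.mem_range, exists_prop] using Ico_subset_biUnion_Ico j σ hx

theorem le_of_mem_Ico_of_mem_Ico {X : Type*} [LinearOrder X] {σ : ℕ → X} {k i j : ℕ}
    {x y : X} (hσ : MonotoneOn σ (Iic k)) (hi : i ≤ k) (hx : x ∈ Ico (σ i) (σ (i + 1)))
    (hy : y ∈ Ico (σ j) (σ (j + 1))) (hxy : x ≤ y) : i ≤ j := by
  by_contra! hji
  have : σ (j + 1) ≤ σ i := hσ (mem_Iic.2 (by omega)) (mem_Iic.2 hi) hji
  exact (hy.2.trans_le (this.trans hx.1)).not_ge hxy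

theorem biUnion_mem_copies {k : ℕ} {σ : ℕ → Ordinal} (hσ : MonotoneOn σ (Iic k))
    (hσ0 : σ 0 = 0) {C : ℕ → Set Ordinal}
    (hC : ∀ j < k, C j ∈ ICopies (σ j) (σ (j + 1))) :
    ⋃ j ∈ Finset.range k, C j ∈ Copies (σ k) := by
  choose! g hg hmaps hgC using fun j hj => mem_iCopies_iff.1 (hC j hj)
  choose! I hIk hI using fun x (hx : x < σ k) =>
    exists_lt_mem_Ico_of_mem_Ico (σ := σ) ⟨hσ0 ▸ zero_le, hx⟩
  have hblock_le : ∀ j < k, σ (j + 1) ≤ σ k := fun j hj =>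
    hσ (mem_Iic.2 hj) (mem_Iic.2 le_rfl) hj
  have hI_eq : ∀ j < k, ∀ x ∈ Ico (σ j) (σ (j + 1)), I x = j := fun j hj x hx =>
    have hxk : x < σ k := hx.2.trans_le (hblock_le j hj)
    le_antisymm (le_of_mem_Ico_of_mem_Ico hσ (hIk x hxk).le (hI x hxk) hx le_rfl)
      (le_of_mem_Ico_of_mem_Ico hσ hj.le hx (hI x hxk) le_rfl)
  refine mem_copies_iff.2 ⟨fun x => g (I x) x, ?_, ?_, ?_⟩
  · intro x hx y hy hxy
    rcases (le_of_mem_Ico_of_mem_Ico hσ (hIk x hx).le (hI x hx) (hI y hy) hxy.le).lt_or_eq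
      with hlt | heq
    · calc g (I x) x < σ (I x + 1) := (hmaps _ (hIk x hx) (hI x hx)).2
        _ ≤ σ (I y) := hσ (mem_Iic.2 (hIk x hx)) (mem_Iic.2 (hIk y hy).le) hlt
        _ ≤ g (I y) y := (hmaps _ (hIk y hy) (hI y hy)).1
    · simp only [heq]
      exact hg _ (hIk y hy) (heq ▸ hI x hx) (hI y hy) hxy
  · intro x hx
    exact (hmaps _ (hIk x hx) (hI x hx)).2.trans_le (hblock_le _ (hIk x hx))
  · ext y
    simp only [mem_iUnion, Finset.mem_range, exists_prop, mem_image, mem_Iio]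
    constructor
    · rintro ⟨j, hj, hy⟩
      rw [hgC j hj] at hy
      obtain ⟨x, hx, rfl⟩ := hy
      exact ⟨x, hx.2.trans_le (hblock_le j hj), by rw [hI_eq j hj x hx]⟩
    · rintro ⟨x, hx, rfl⟩
      exact ⟨I x, hIk x hx, hgC _ (hIk x hx) ▸ mem_image_of_mem _ (hI x hx)⟩

section SumOfPowers

variable {k : ℕ} {δ σ : ℕ → Ordinal} (hσ : ∀ i < k, σ (i + 1) = σ i + ω ^ δ i)
include hσ

theorem strictMonoOn_Iic_of_eq_add_opow : StrictMonoOn σ (Iic k) :=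
  strictMonoOn_Iic_of_lt_succ fun m hm => by
    rw [Order.succ_eq_add_one, hσ m hm]
    exact lt_add_of_pos_right _ (opow_pos _ omega0_pos)

theorem sub_eq_opow_add_sub {i : ℕ} {x : Ordinal} (hi : i < k)
    (hx : x ∈ Ico (σ i) (σ (i + 1))) : σ k - x = ω ^ δ i + (σ k - σ (i + 1)) := by
  apply sub_eq_of_add_eq
  have hr : x - σ i < ω ^ δ i := (sub_lt_of_le hx.1).2 (hσ i hi ▸ hx.2)
  have hk : σ (i + 1) ≤ σ k :=
    (strictMonoOn_Iic_of_eq_add_opow hσ).monotoneOn (mem_Iic.2 hi) (mem_Iic.2 le_rfl) hi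
  calc x + (ω ^ δ i + (σ k - σ (i + 1)))
      = σ i + (x - σ i + ω ^ δ i) + (σ k - σ (i + 1)) := by
        rw [← add_assoc (σ i), Ordinal.add_sub_cancel_of_le hx.1, add_assoc]
    _ = σ k := by rw [add_omega0_opow hr, ← hσ i hi, Ordinal.add_sub_cancel_of_le hk]

theorem sub_lt_opow_add_one (hanti : ∀ i j, i ≤ j → j < k → δ j ≤ δ i) {i m : ℕ}
    (him : i ≤ m) (hmk : m ≤ k) : σ k - σ m < ω ^ (δ i + 1) := by
  induction hmk using Nat.decreasingInduction with
  | self => rw [Ordinal.sub_self]; exact opow_pos _ omega0_pos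
  | of_succ m hm ih =>
    have hmem : σ m ∈ Ico (σ m) (σ (m + 1)) :=
      ⟨le_rfl, strictMonoOn_Iic_of_eq_add_opow hσ (mem_Iic.2 hm.le) (mem_Iic.2 hm)
        (lt_add_one m)⟩
    rw [sub_eq_opow_add_sub hσ hm hmem]
    refine isPrincipal_add_omega0_opow _ ?_ (ih (him.trans (Nat.le_succ m)))
    exact (opow_lt_opow_iff_right one_lt_omega0).2 ((hanti i m him hm).trans_lt (lt_add_one _))

theorem sub_lt_sub_of_lt (hanti : ∀ i j, i ≤ j → j < k → δ j ≤ δ i) (hσ0 : σ 0 = 0)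
    {j : ℕ} {x : Ordinal} (hj : j ≤ k) (hx : x < σ j) : σ k - σ j < σ k - x := by
  obtain ⟨i, hij, hxi⟩ := exists_lt_mem_Ico_of_mem_Ico (σ := σ) ⟨hσ0 ▸ zero_le, hx⟩
  have hik : i < k := hij.trans_le hj
  have hT : σ k - σ (i + 1) < ω ^ δ i * ω := by
    rw [← opow_add_one]
    exact sub_lt_opow_add_one hσ hanti (Nat.le_succ i) hik
  calc σ k - σ j ≤ σ k - σ (i + 1) :=
        sub_le_sub_left ((strictMonoOn_Iic_of_eq_add_opow hσ).monotoneOn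
          (mem_Iic.2 hik) (mem_Iic.2 hj) hij) _
    _ < ω ^ δ i + (σ k - σ (i + 1)) :=
        lt_of_not_ge fun h => hT.not_ge (add_le_right_iff_mul_omega0_le.1 h)
    _ = σ k - x := (sub_eq_opow_add_sub hσ hik hxi).symm

end SumOfPowers

theorem stmt5_general (k : ℕ) (δ' : ℕ → Ordinal)
    (hanti : ∀ i j, i ≤ j → j < k → δ' j ≤ δ' i)
    (σ : ℕ → Ordinal) (hσ0 : σ 0 = 0) (hσ : ∀ i < k, σ (i + 1) = σ i + ω ^ δ' i)
    (γ : Ordinal) (hγ : γ = σ k) :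
    (∀ C ⊆ Set.Iio γ,
      (C ∈ Copies γ ↔ ∀ j < k,
        C ∩ Set.Ico (σ j) (σ (j + 1)) ∈ ICopies (σ j) (σ (j + 1)))) ∧
    Copies γ = {A | ∃ C : ℕ → Set Ordinal,
      (∀ j < k, C j ∈ ICopies (σ j) (σ (j + 1))) ∧
      A = ⋃ j ∈ Finset.range k, C j} := by
  subst hγ
  have hmono : MonotoneOn σ (Iic k) := (strictMonoOn_Iic_of_eq_add_opow hσ).monotoneOn
  have hsplit : ∀ A ∈ Copies (σ k), ∀ j < k,
      A ∩ Ico (σ j) (σ (j + 1)) ∈ ICopies (σ j) (σ (j + 1)) := fun A hA j hj =>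
    inter_Ico_mem_iCopies hA (fun _ => sub_lt_sub_of_lt hσ hanti hσ0 hj.le)
      (fun _ => sub_lt_sub_of_lt hσ hanti hσ0 hj)
  have hcover : ∀ C ⊆ Iio (σ k), ⋃ j ∈ Finset.range k, C ∩ Ico (σ j) (σ (j + 1)) = C :=
    fun C hC => by
      rw [← inter_iUnion₂, inter_eq_left]
      exact fun x hx => Ico_subset_biUnion_Ico k σ ⟨hσ0 ▸ zero_le, hC hx⟩
  refine ⟨fun C hC => ⟨hsplit C, fun h => ?_⟩, ?_⟩
  · simpa only [hcover C hC] using biUnion_mem_copies hmono hσ0 h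
  ext A
  refine ⟨fun hA => ⟨_, hsplit A hA, (hcover A (subset_Iio_of_mem_copies hA)).symm⟩, ?_⟩
  rintro ⟨C, hC, rfl⟩
  exact biUnion_mem_copies hmono hσ0 hC

/-- Let `k ≥ 1`, `δ'_1 ≥ … ≥ δ'_k > 0`, `γ = ω^{δ'_1} + … + ω^{δ'_k}` (with partial
sums `σ`), and let `Λ_j = [σ j, σ (j+1))` be the consecutive intervals of `γ` of order
type `ω^{δ'_j}`. Then `C ⊆ γ` is a copy of `γ` iff each `C ∩ Λ_j` is the image of an
order-embedding of `Λ_j` into itself; equivalently, `P(γ)` is the family of unions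
`⋃_j C_j` with `C_j` a copy of `Λ_j`. -/
theorem stmt5 (k : ℕ) (hk : 1 ≤ k) (δ' : ℕ → Ordinal)
    (hpos : ∀ i < k, 0 < δ' i)
    (hanti : ∀ i j, i ≤ j → j < k → δ' j ≤ δ' i)
    (σ : ℕ → Ordinal) (hσ0 : σ 0 = 0) (hσ : ∀ i < k, σ (i + 1) = σ i + ω ^ δ' i)
    (γ : Ordinal) (hγ : γ = σ k) :
    (∀ C ⊆ Set.Iio γ,
      (C ∈ Copies γ ↔ ∀ j < k,
        C ∩ Set.Ico (σ j) (σ (j + 1)) ∈ ICopies (σ j) (σ (j + 1)))) ∧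
    Copies γ = {A | ∃ C : ℕ → Set Ordinal,
      (∀ j < k, C j ∈ ICopies (σ j) (σ (j + 1))) ∧
      A = ⋃ j ∈ Finset.range k, C j} :=
  stmt5_general k δ' hanti σ hσ0 hσ γ hγ
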